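/- Let Q = T[H_1, ..., H_t] be a strongly connected semicomplete composition. For every non-king u of Q, there exists a 3-king v of Q such that d_Q(u, v) > 3 and v dominates u (i.e., vu is an arc). -/

import Mathlib

/-- There is a directed walk (equivalently, path) of length at most `k` from `x` to `y`. -/
def KReach {V : Type*} (A : V → V → Prop) (k : ℕ) (x y : V) : Prop :=
  ∃ n : ℕ, n ≤ k ∧ ∃ f : ℕ → V, f 0 = x ∧ f n = y ∧ ∀ i < n, A (f i) (f (i + 1))

/-- `x` is a `k`-king: it reaches every vertex by a path of length at most `k`. -/
def IsKKing {V : Type*} (A : V → V → Prop) (k : ℕ) (x : V) : Prop :=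
  ∀ y : V, KReach A k x y

/-- A strict `k`-king: a `k`-king with some vertex at distance exactly `k`. -/
def IsStrictKKing {V : Type*} (A : V → V → Prop) (k : ℕ) (x : V) : Prop :=
  IsKKing A k x ∧ ∃ y : V, ¬ KReach A (k - 1) x y

/-- Strong connectivity of a digraph. -/
def Strong {V : Type*} (A : V → V → Prop) : Prop :=
  ∀ x y : V, ∃ k : ℕ, KReach A k x y

/-- Semicomplete digraph: at least one arc between any two distinct vertices. -/
def Semicomplete {V : Type*} (A : V → V → Prop) : Prop :=
  ∀ x y : V, x ≠ y → A x y ∨ A y x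

/-- Tournament: exactly one arc between any two distinct vertices, no loops. -/
def IsTournament {V : Type*} (A : V → V → Prop) : Prop :=
  Irreflexive A ∧ ∀ x y : V, x ≠ y → (A x y ↔ ¬ A y x)

/-- Out-degree of a vertex. -/
noncomputable def outDeg {V : Type*} (A : V → V → Prop) (x : V) : ℕ :=
  Set.ncard {y | A x y}

/-- There is a directed cycle of length exactly `k` through `x`. -/
def CycleThrough {V : Type*} (A : V → V → Prop) (k : ℕ) (x : V) : Prop :=
  ∃ f : ℕ → V, f 0 = x ∧ f k = x ∧ (∀ i < k, A (f i) (f (i + 1))) ∧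
    ∀ i j, i < k → j < k → f i = f j → i = j

/-- `x` belongs to a directed cycle of length at most `k`. -/
def OnShortCycle {V : Type*} (A : V → V → Prop) (k : ℕ) (x : V) : Prop :=
  ∃ n : ℕ, 2 ≤ n ∧ n ≤ k ∧ CycleThrough A n x

/-- `AQ` (on `W`) is the composition `T[H_1, …, H_t]` of digraphs over the digraph `AT`
(on index type `ι`), where the fiber of `π` over `i` is the vertex set of `H_i`
(each fiber is nonempty since `π` is surjective), the arcs of `H_i` are the arcs of
`AQ` inside the fiber over `i`, and arcs between different fibers are determined by `AT`. -/
structure IsComposition {ι W : Type*} (AT : ι → ι → Prop) (AQ : W → W → Prop)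
    (π : W → ι) : Prop where
  surj : Function.Surjective π
  cross : ∀ x y : W, π x ≠ π y → (AQ x y ↔ AT (π x) (π y))

/-- The digraph `H_i`: the induced subdigraph on the fiber of `π` over `i`. -/
def FiberArc {ι W : Type*} (AQ : W → W → Prop) (π : W → ι) (i : ι) :
    {w : W // π w = i} → {w : W // π w = i} → Prop :=
  fun a b => AQ a.1 b.1

/-- The induced subdigraph on the vertices satisfying `P`. -/
def DelArc {V : Type*} (A : V → V → Prop) (P : V → Prop) :
    {v : V // P v} → {v : V // P v} → Prop :=
  fun a b => A a.1 b.1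

/-- `{v}` is a `k`-absorbent set: every other vertex reaches `v` in at most `k` steps. -/
def SingletonAbsorbent {V : Type*} (A : V → V → Prop) (k : ℕ) (v : V) : Prop :=
  ∀ x : V, x ≠ v → KReach A k x v

/-- A quasi-kernel: an independent set `K` such that every vertex outside `K`
reaches some vertex of `K` by a path of length at most 2. -/
def QuasiKernel {V : Type*} (A : V → V → Prop) (K : Set V) : Prop :=
  (∀ x ∈ K, ∀ y ∈ K, x ≠ y → ¬ A x y) ∧ ∀ x ∉ K, ∃ y ∈ K, KReach A 2 x y

/-- A `k`-kernel: a `k`-independent and `(k-1)`-absorbent set. -/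
def KKernel {V : Type*} (A : V → V → Prop) (k : ℕ) (K : Set V) : Prop :=
  (∀ x ∈ K, ∀ y ∈ K, x ≠ y → ¬ KReach A (k - 1) x y) ∧
    ∀ x ∉ K, ∃ y ∈ K, KReach A (k - 1) x y


/-! Distances up to 3 in `Q = T[H_1, …, H_t]` are those of `T` between the fibres, as long as two
vertices of one fibre are 3-reachable from each other; this holds because every vertex of a strong
semicomplete digraph on at least two vertices lies on a cycle of length at most 3. So everything
happens in `T`. If `i` is not a 3-king of `T`, let `j` have maximum out-degree inside the set `S`
of vertices that `i` does not 3-reach. By semicompleteness `j` dominates every vertex that `i`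
2-reaches, `i` included, hence `j` 2-reaches every vertex outside `S`; Landau's argument for
tournaments shows that it 2-reaches every vertex of `S` too. Any vertex of the fibre of `j` is the
required `v`. -/

open Finset

section KReach

variable {V : Type*} {A : V → V → Prop} {k m n : ℕ} {x y z : V}

theorem KReach.rfl : KReach A k x x :=
  ⟨0, k.zero_le, fun _ => x, by simp⟩

theorem KReach.mono (h : KReach A m x y) (hmn : m ≤ n) : KReach A n x y := by
  obtain ⟨l, hl, f, hf⟩ := h
  exact ⟨l, hl.trans hmn, f, hf⟩

theorem KReach.cons (hxy : A x y) (h : KReach A k y z) : KReach A (k + 1) x z := by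
  obtain ⟨l, hl, f, hf0, hfl, harc⟩ := h
  refine ⟨l + 1, by omega, fun i => if i = 0 then x else f (i - 1), by simp, by simp [hfl], ?_⟩
  rintro (_ | i) hi
  · simpa [hf0] using hxy
  · simpa using harc i (by omega)

theorem kreach_zero_iff : KReach A 0 x y ↔ x = y := by
  constructor
  · rintro ⟨l, hl, f, hf0, hfl, -⟩
    obtain rfl : l = 0 := by omega
    exact hf0.symm.trans hfl
  · rintro rfl
    exact KReach.rfl

theorem kreach_succ_iff : KReach A (k + 1) x y ↔ x = y ∨ ∃ z, A x z ∧ KReach A k z y := by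
  constructor
  · rintro ⟨_ | l, hl, f, hf0, hfl, harc⟩
    · exact Or.inl (hf0.symm.trans hfl)
    · refine Or.inr ⟨f 1, hf0 ▸ harc 0 (by omega), l, by omega, fun i => f (i + 1), rfl, hfl,
        fun i hi => harc (i + 1) (by omega)⟩
  · rintro (rfl | ⟨z, hxz, hz⟩)
    exacts [KReach.rfl, hz.cons hxz]

theorem KReach.single (h : A x y) : KReach A 1 x y :=
  KReach.rfl.cons h

theorem KReach.trans (hxy : KReach A m x y) (hyz : KReach A n y z) : KReach A (m + n) x z := by
  induction m generalizing x with
  | zero =>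
    obtain rfl := kreach_zero_iff.1 hxy
    simpa using hyz
  | succ m ih =>
    rcases kreach_succ_iff.1 hxy with rfl | ⟨w, hxw, hw⟩
    · exact hyz.mono (by omega)
    · exact ((ih hw).cons hxw).mono (by omega)

theorem KReach.exists_of_add (h : KReach A (m + n) x z) :
    ∃ y, KReach A m x y ∧ KReach A n y z := by
  induction m generalizing x with
  | zero => exact ⟨x, KReach.rfl, by simpa using h⟩
  | succ m ih =>
    rw [Nat.add_right_comm] at h
    rcases kreach_succ_iff.1 h with rfl | ⟨w, hxw, hw⟩
    · exact ⟨x, KReach.rfl, KReach.rfl⟩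
    · obtain ⟨y, hwy, hyz⟩ := ih hw
      exact ⟨y, hwy.cons hxw, hyz⟩

theorem KReach.of_closed {P : V → Prop} (hP : ∀ a b, P a → A a b → P b) (hx : P x)
    (h : KReach A k x y) : P y := by
  induction k generalizing x with
  | zero => exact kreach_zero_iff.1 h ▸ hx
  | succ k ih =>
    rcases kreach_succ_iff.1 h with rfl | ⟨z, hxz, hz⟩
    exacts [hx, ih (hP x z hx hxz) hz]

end KReach

namespace Semicomplete

variable {V : Type*} {A : V → V → Prop}

theorem exists_arc_kreach_two [Nontrivial V] (hsemi : Semicomplete A) (hirr : Irreflexive A)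
    (hstrong : Strong A) (i : V) : ∃ a, A i a ∧ KReach A 2 a i := by
  by_contra! hcon
  -- otherwise the out-neighbourhood of `i` is closed under arcs, and `i` is reachable from it
  have hclosed : ∀ c d, A i c → A c d → A i d := by
    intro c d hic hcd
    have hdi : d ≠ i := by
      rintro rfl
      exact hcon c hic ((KReach.single hcd).mono (by norm_num))
    exact (hsemi i d hdi.symm).resolve_right
      fun hdi' => hcon c hic ((KReach.single hcd).trans (KReach.single hdi'))
  obtain ⟨a, hia⟩ : ∃ a, A i a := by
    obtain ⟨j, hj⟩ := exists_ne i
    obtain ⟨_ | k, hk⟩ := hstrong i j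
    · exact absurd (kreach_zero_iff.1 hk) hj.symm
    · rcases kreach_succ_iff.1 hk with h | ⟨a, hia, -⟩
      exacts [absurd h hj.symm, ⟨a, hia⟩]
  obtain ⟨k, hk⟩ := hstrong a i
  exact hirr i (hk.of_closed hclosed hia)

theorem arc_of_not_kreach_succ (hsemi : Semicomplete A) {k : ℕ} {i j m : V}
    (hj : ¬ KReach A (k + 1) i j) (hm : KReach A k i m) : A j m := by
  have hmj : m ≠ j := by
    rintro rfl
    exact hj (hm.mono k.le_succ)
  exact (hsemi j m hmj.symm).resolve_right fun hmj' => hj (hm.trans (KReach.single hmj'))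

theorem kreach_two_of_max_outdeg [DecidableEq V] [DecidableRel A] (hsemi : Semicomplete A)
    (hirr : Irreflexive A) {S : Finset V} {j : V} (hj : j ∈ S)
    (hmax : ∀ m ∈ S, #(S.filter (A m ·)) ≤ #(S.filter (A j ·))) {m : V} (hm : m ∈ S) :
    KReach A 2 j m := by
  by_cases hjm : A j m
  · exact (KReach.single hjm).mono (by norm_num)
  by_cases hpath : ∃ p ∈ S, A j p ∧ A p m
  · obtain ⟨p, -, hjp, hpm⟩ := hpath
    exact (KReach.single hpm).cons hjp
  by_cases hmj : m = j
  · exact hmj ▸ KReach.rfl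
  exfalso
  push Not at hpath
  -- `m` dominates `j` and all of its out-neighbours in `S`, so it beats `j`'s out-degree
  have hsub : insert j (S.filter (A j ·)) ⊆ S.filter (A m ·) := by
    intro q hq
    rcases mem_insert.1 hq with rfl | hq
    · exact mem_filter.2 ⟨hj, (hsemi m q hmj).resolve_right hjm⟩
    · obtain ⟨hqS, hjq⟩ := mem_filter.1 hq
      have hqm : q ≠ m := by
        rintro rfl
        exact hjm hjq
      exact mem_filter.2 ⟨hqS, (hsemi m q hqm.symm).resolve_right (hpath q hqS hjq)⟩
  have hcard := card_le_card hsub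
  rw [card_insert_of_notMem (by simp [hirr j])] at hcard
  have := hmax m hm
  omega

theorem exists_twoKing_dominating_not_kreach [Fintype V] (hsemi : Semicomplete A)
    (hirr : Irreflexive A) {k : ℕ} {i : V} (hi : ¬ IsKKing A (k + 1) i) :
    ∃ j, IsKKing A 2 j ∧ ¬ KReach A (k + 1) i j ∧ A j i := by
  classical
  set S := univ.filter fun j => ¬ KReach A (k + 1) i j
  obtain ⟨y, hy⟩ : ∃ y, ¬ KReach A (k + 1) i y := by simpa [IsKKing] using hi
  obtain ⟨j, hjS, hjmax⟩ := S.exists_max_image (fun v => #(S.filter (A v ·))) ⟨y, by simpa [S]⟩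
  have hj : ¬ KReach A (k + 1) i j := (mem_filter.1 hjS).2
  refine ⟨j, fun m => ?_, hj, hsemi.arc_of_not_kreach_succ hj KReach.rfl⟩
  by_cases hmS : m ∈ S
  · exact hsemi.kreach_two_of_max_outdeg hirr hjS hjmax hmS
  · have him : KReach A (k + 1) i m := by simpa [S] using hmS
    obtain ⟨z, hiz, hzm⟩ := him.exists_of_add
    exact hzm.cons (hsemi.arc_of_not_kreach_succ hj hiz)

end Semicomplete

namespace IsComposition

variable {ι W : Type*} {AT : ι → ι → Prop} {AQ : W → W → Prop} {π : W → ι}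

theorem kreach_project (hcomp : IsComposition AT AQ π) {k : ℕ} {x y : W}
    (h : KReach AQ k x y) : KReach AT k (π x) (π y) := by
  induction k generalizing x with
  | zero => exact kreach_zero_iff.2 (congrArg π (kreach_zero_iff.1 h))
  | succ k ih =>
    rcases kreach_succ_iff.1 h with rfl | ⟨z, hxz, hz⟩
    · exact KReach.rfl
    · by_cases hxz' : π x = π z
      · exact (hxz' ▸ ih hz).mono k.le_succ
      · exact (ih hz).cons ((hcomp.cross x z hxz').1 hxz)

theorem strong_project (hcomp : IsComposition AT AQ π) (h : Strong AQ) : Strong AT := by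
  intro i j
  obtain ⟨x, rfl⟩ := hcomp.surj i
  obtain ⟨y, rfl⟩ := hcomp.surj j
  obtain ⟨k, hk⟩ := h x y
  exact ⟨k, hcomp.kreach_project hk⟩

theorem kreach_lift (hcomp : IsComposition AT AQ π) (hirr : Irreflexive AT) {k : ℕ} {x y : W}
    (hxy : π x ≠ π y) (h : KReach AT k (π x) (π y)) : KReach AQ k x y := by
  induction k generalizing x with
  | zero => exact absurd (kreach_zero_iff.1 h) hxy
  | succ k ih =>
    rcases kreach_succ_iff.1 h with h' | ⟨j, hxj, hj⟩
    · exact absurd h' hxy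
    obtain ⟨z, rfl⟩ := hcomp.surj j
    by_cases hzy : π z = π y
    · rw [hzy] at hxj
      exact (KReach.single ((hcomp.cross x y hxy).2 hxj)).mono (by omega)
    · have hxz : π x ≠ π z := fun h => hirr _ (h ▸ hxj)
      exact (ih hzy hj).cons ((hcomp.cross x z hxz).2 hxj)

theorem kreach_three_of_fiber_eq (hcomp : IsComposition AT AQ π) (hirr : Irreflexive AT)
    {x y : W} (hcyc : ∃ a, AT (π x) a ∧ KReach AT 2 a (π x)) (hxy : π x = π y) :
    KReach AQ 3 x y := by
  obtain ⟨a, hxa, ha⟩ := hcyc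
  obtain ⟨z, rfl⟩ := hcomp.surj a
  have hxz : π x ≠ π z := fun h => hirr _ (h ▸ hxa)
  rw [hxy] at ha hxz
  exact (hcomp.kreach_lift hirr hxz.symm ha).cons ((hcomp.cross x z (hxy ▸ hxz)).2 hxa)

theorem kreach_iff (hcomp : IsComposition AT AQ π) (hirr : Irreflexive AT)
    (hcyc : ∀ i, ∃ a, AT i a ∧ KReach AT 2 a i) {k : ℕ} (hk : 3 ≤ k) {x y : W} :
    KReach AQ k x y ↔ KReach AT k (π x) (π y) := by
  refine ⟨hcomp.kreach_project, fun h => ?_⟩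
  by_cases hxy : π x = π y
  · exact (hcomp.kreach_three_of_fiber_eq hirr (hcyc (π x)) hxy).mono hk
  · exact hcomp.kreach_lift hirr hxy h

end IsComposition

theorem stmt11_general {ι W : Type*} [Fintype ι]
    (AT : ι → ι → Prop) (AQ : W → W → Prop) (π : W → ι)
    (hcard : 2 ≤ Fintype.card ι)
    (hTirr : Irreflexive AT)
    (hsemi : Semicomplete AT) (hcomp : IsComposition AT AQ π)
    (hstrong : Strong AQ) :
    ∀ u : W, ¬ IsKKing AQ 3 u →
      ∃ v : W, IsKKing AQ 3 v ∧ ¬ KReach AQ 3 u v ∧ AQ v u := by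
  intro u hu
  have : Nontrivial ι := Fintype.one_lt_card_iff_nontrivial.1 hcard
  have hiff : ∀ x y, KReach AQ 3 x y ↔ KReach AT 3 (π x) (π y) := fun x y =>
    hcomp.kreach_iff hTirr (hsemi.exists_arc_kreach_two hTirr (hcomp.strong_project hstrong))
      le_rfl
  have hTu : ¬ IsKKing AT 3 (π u) := fun h => hu fun y => (hiff u y).2 (h (π y))
  obtain ⟨j, hking, hunreach, hju⟩ := hsemi.exists_twoKing_dominating_not_kreach hTirr hTu
  obtain ⟨v, rfl⟩ := hcomp.surj j
  have hvu : π v ≠ π u := fun h => hunreach (h ▸ KReach.rfl)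
  exact ⟨v, fun y => (hiff v y).2 ((hking (π y)).mono (by norm_num)),
    fun h => hunreach ((hiff u v).1 h), (hcomp.cross v u hvu).2 hju⟩

/-- In a strong semicomplete composition, for every non-king `u` there is a 3-king
`v` with `d(u, v) > 3` which dominates `u`. -/
theorem stmt11 {ι W : Type*} [Fintype ι] [Fintype W]
    (AT : ι → ι → Prop) (AQ : W → W → Prop) (π : W → ι)
    (hcard : 2 ≤ Fintype.card ι)
    (hTirr : Irreflexive AT) (hQirr : Irreflexive AQ)
    (hsemi : Semicomplete AT) (hcomp : IsComposition AT AQ π)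
    (hstrong : Strong AQ) :
    ∀ u : W, ¬ IsKKing AQ 3 u →
      ∃ v : W, IsKKing AQ 3 v ∧ ¬ KReach AQ 3 u v ∧ AQ v u :=
  stmt11_general AT AQ π hcard hTirr hsemi hcomp hstrong
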